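/- Under the assumptions that Y ⊂ ℝ^m is a nonempty open convex subset of the domain of F, F_φ has closed graph equal to the epigraph of v on Y, and F_φ is locally bounded from below at y₀ ∈ Y, the value function v(y) = inf_{x ∈ F(y)} φ(x, y) is locally Lipschitz continuous at y₀. -/

import Mathlib

/-!
Near `y₀` the set `F_φ(y)` is nonempty and bounded below, so `v(y)` is a real number, the greatest
lower bound of `F_φ(y)`. The graph of `F_φ` is the projection of the epigraph of `φ` over the graph
of `F`, hence convex, and taking fibrewise infima of a convex subset of `ℝ^m × ℝ` gives a convex
function. A real convex function on an open ball is locally Lipschitz.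
-/

open Set

theorem EReal.sInf_image_coe {s : Set ℝ} (hne : s.Nonempty) (hbdd : BddBelow s) :
    sInf ((↑) '' s : Set EReal) = ↑(sInf s) :=
  (Monotone.map_csInf_of_continuousAt continuous_coe_real_ereal.continuousAt
    EReal.coe_strictMono.monotone hne hbdd).symm

section
variable {E G : Type*} [AddCommGroup E] [Module ℝ E] [AddCommGroup G] [Module ℝ G]

theorem convex_setOf_exists_mem_le {F : G → Set E} {φ : E × G → ℝ}
    (hφ : ConvexOn ℝ {p : E × G | p.1 ∈ F p.2} φ) :
    Convex ℝ {q : G × ℝ | ∃ x ∈ F q.1, φ (x, q.1) ≤ q.2} := by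
  suffices h : {q : G × ℝ | ∃ x ∈ F q.1, φ (x, q.1) ≤ q.2} =
      (LinearMap.snd ℝ E G).prodMap LinearMap.id ''
        {p : (E × G) × ℝ | p.1 ∈ {p : E × G | p.1 ∈ F p.2} ∧ φ p.1 ≤ p.2} by
    rw [h]
    exact hφ.convex_epigraph.linear_image _
  ext ⟨y, μ⟩
  simp

theorem convexOn_of_isGLB {Φ : G → Set ℝ} (hΦ : Convex ℝ {q : G × ℝ | q.2 ∈ Φ q.1})
    {U : Set G} (hU : Convex ℝ U) {f : G → ℝ} (hf : ∀ y ∈ U, IsGLB (Φ y) (f y)) :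
    ConvexOn ℝ U f := by
  refine ⟨hU, fun y₁ hy₁ y₂ hy₂ a b ha hb hab => le_of_forall_pos_le_add fun ε hε => ?_⟩
  obtain ⟨μ₁, hμ₁, -, hμ₁ε⟩ := (hf y₁ hy₁).exists_between (lt_add_of_pos_right (f y₁) hε)
  obtain ⟨μ₂, hμ₂, -, hμ₂ε⟩ := (hf y₂ hy₂).exists_between (lt_add_of_pos_right (f y₂) hε)
  have hmem : a * μ₁ + b * μ₂ ∈ Φ (a • y₁ + b • y₂) :=
    hΦ (x := (y₁, μ₁)) (y := (y₂, μ₂)) hμ₁ hμ₂ ha hb hab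
  calc f (a • y₁ + b • y₂) ≤ a * μ₁ + b * μ₂ := (hf _ (hU hy₁ hy₂ ha hb hab)).1 hmem
    _ ≤ a * (f y₁ + ε) + b * (f y₂ + ε) := by gcongr
    _ = a • f y₁ + b • f y₂ + ε := by simp only [smul_eq_mul]; linear_combination ε * hab
end

theorem stmt_12_general (n m : ℕ)
    (φ : (Fin n → ℝ) × (Fin m → ℝ) → ℝ)
    (F : (Fin m → ℝ) → Set (Fin n → ℝ))
    (hφ : ConvexOn ℝ Set.univ φ)
    (hFgraph : IsClosed {p : (Fin n → ℝ) × (Fin m → ℝ) | p.1 ∈ F p.2} ∧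
               Convex ℝ {p : (Fin n → ℝ) × (Fin m → ℝ) | p.1 ∈ F p.2})
    (Fφ : (Fin m → ℝ) → Set ℝ)
    (hFφ : ∀ y, Fφ y = {μ : ℝ | ∃ x ∈ F y, μ ≥ φ (x, y)})
    (v : (Fin m → ℝ) → EReal)
    (hv : ∀ y, v y = sInf (Real.toEReal '' Fφ y))
    (Y : Set (Fin m → ℝ)) (hYopen : IsOpen Y)
    (hYdom : ∀ y ∈ Y, (F y).Nonempty)
    (y₀ : Fin m → ℝ) (hy₀ : y₀ ∈ Y)
    (hlb : ∃ m₀ : ℝ, ∃ A : Set (Fin m → ℝ), IsOpen A ∧ y₀ ∈ A ∧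
      ∀ y ∈ A, ∀ μ ∈ Fφ y, m₀ ≤ μ) :
    ∃ U ∈ nhds y₀, ∃ K : NNReal,
      LipschitzOnWith K (fun y => (v y).toReal) U := by
  obtain ⟨m₀, A, hAopen, hy₀A, hm₀⟩ := hlb
  obtain ⟨r, hr, hball⟩ := Metric.isOpen_iff.mp (hAopen.inter hYopen) y₀ ⟨hy₀A, hy₀⟩
  have hglb : ∀ y ∈ Metric.ball y₀ r, IsGLB (Fφ y) (v y).toReal := by
    intro y hy
    have hne : (Fφ y).Nonempty := by
      obtain ⟨x, hx⟩ := hYdom y (hball hy).2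
      exact ⟨φ (x, y), by rw [hFφ]; exact ⟨x, hx, le_rfl⟩⟩
    have hbdd : BddBelow (Fφ y) := ⟨m₀, hm₀ y (hball hy).1⟩
    rw [hv, EReal.sInf_image_coe hne hbdd, EReal.toReal_coe]
    exact isGLB_csInf hne hbdd
  have hgraph : Convex ℝ {q : (Fin m → ℝ) × ℝ | q.2 ∈ Fφ q.1} := by
    simp only [hFφ]
    exact convex_setOf_exists_mem_le (hφ.subset (subset_univ _) hFgraph.2)
  obtain ⟨K, t, ht, hK⟩ := (convexOn_of_isGLB hgraph (convex_ball y₀ r) hglb).locallyLipschitzOn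
    Metric.isOpen_ball (Metric.mem_ball_self hr)
  rw [Metric.isOpen_ball.nhdsWithin_eq (Metric.mem_ball_self hr)] at ht
  exact ⟨t, ht, K, hK⟩

theorem stmt_12 (n m : ℕ)
    (φ : (Fin n → ℝ) × (Fin m → ℝ) → ℝ)
    (F : (Fin m → ℝ) → Set (Fin n → ℝ))
    (hφ : ConvexOn ℝ Set.univ φ)
    (hFgraph : IsClosed {p : (Fin n → ℝ) × (Fin m → ℝ) | p.1 ∈ F p.2} ∧
               Convex ℝ {p : (Fin n → ℝ) × (Fin m → ℝ) | p.1 ∈ F p.2})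
    (Fφ : (Fin m → ℝ) → Set ℝ)
    (hFφ : ∀ y, Fφ y = {μ : ℝ | ∃ x ∈ F y, μ ≥ φ (x, y)})
    (v : (Fin m → ℝ) → EReal)
    (hv : ∀ y, v y = sInf (Real.toEReal '' Fφ y))
    (Y : Set (Fin m → ℝ)) (hYne : Y.Nonempty) (hYopen : IsOpen Y)
    (hYconv : Convex ℝ Y) (hYdom : ∀ y ∈ Y, (F y).Nonempty)
    (hgraphclosed : IsClosed {p : (Fin m → ℝ) × ℝ | p.2 ∈ Fφ p.1})
    (hepi : {p : (Fin m → ℝ) × ℝ | p.1 ∈ Y ∧ p.2 ∈ Fφ p.1}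
          = {p : (Fin m → ℝ) × ℝ | p.1 ∈ Y ∧ v p.1 ≤ (p.2 : EReal)})
    (y₀ : Fin m → ℝ) (hy₀ : y₀ ∈ Y)
    (hlb : ∃ m₀ : ℝ, ∃ A : Set (Fin m → ℝ), IsOpen A ∧ y₀ ∈ A ∧
      ∀ y ∈ A, ∀ μ ∈ Fφ y, m₀ ≤ μ) :
    ∃ U ∈ nhds y₀, ∃ K : NNReal,
      LipschitzOnWith K (fun y => (v y).toReal) U :=
  stmt_12_general n m φ F hφ hFgraph Fφ hFφ v hv Y hYopen hYdom y₀ hy₀ hlb
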